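/- arXiv:1903.04666 — 8 statements merged into one kernel-verified Lean document; each statement's English description precedes it below -/
import Mathlib

section
/- (Barbalat's lemma) If f : [0,∞) → ℝ is uniformly continuous and the limit lim_{t→∞} ∫₀^t |f(τ)| dτ exists and is finite, then lim_{t→∞} f(t) = 0. -/
open MeasureTheory Filter

/-- Barbalat's lemma: if `f : [0,∞) → ℝ` is uniformly continuous and
`lim_{t→∞} ∫₀^t |f|` exists and is finite, then `f(t) → 0` as `t → ∞`. -/
theorem stmt_3 (f : ℝ → ℝ)
    (hf : UniformContinuousOn f (Set.Ici 0))
    (hint : ∃ L : ℝ, Tendsto (fun t => ∫ τ in (0 : ℝ)..t, |f τ|) atTop (nhds L)) :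
    Tendsto f atTop (nhds 0) := by
  obtain ⟨L, hL⟩ := hint
  by_contra hcon
  rw [Metric.tendsto_atTop] at hcon
  push_neg at hcon
  obtain ⟨ε, hε, hεf⟩ := hcon
  -- uniform continuity with ε/2
  obtain ⟨δ, hδ, hδf⟩ := (Metric.uniformContinuousOn_iff.mp hf) (ε/2) (by linarith)
  set d : ℝ := δ/2 with hd
  have hd0 : 0 < d := by positivity
  -- Cauchy-type bound from convergence
  obtain ⟨N, hN⟩ := (Metric.tendsto_atTop.mp hL) (ε*d/4) (by positivity)
  obtain ⟨t, ht, htf⟩ := hεf (max N 0)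
  have htN : N ≤ t := le_trans (le_max_left _ _) ht
  have ht0 : (0:ℝ) ≤ t := le_trans (le_max_right _ _) ht
  have hcont : ContinuousOn (fun τ => |f τ|) (Set.Ici 0) := hf.continuousOn.abs
  have hint1 : IntervalIntegrable (fun τ => |f τ|) volume 0 t := by
    apply (hcont.mono ?_).intervalIntegrable
    rw [Set.uIcc_of_le ht0]
    exact Set.Icc_subset_Ici_self
  have hint2 : IntervalIntegrable (fun τ => |f τ|) volume t (t+d) := by
    apply (hcont.mono ?_).intervalIntegrable
    rw [Set.uIcc_of_le (by linarith)]
    exact fun x hx => le_trans ht0 hx.1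
  -- lower bound on f on [t, t+d]
  have hlow : ∀ τ ∈ Set.Icc t (t+d), ε/2 ≤ |f τ| := by
    intro τ hτ
    have hτ0 : (0:ℝ) ≤ τ := le_trans ht0 hτ.1
    have hdist : dist τ t < δ := by
      rw [Real.dist_eq, abs_of_nonneg (by linarith [hτ.1])]
      have := hτ.2
      linarith
    have h2 := hδf τ hτ0 t (by exact ht0) hdist
    rw [Real.dist_eq] at h2
    have habs : |f t| - |f τ| ≤ |f τ - f t| := by
      have := abs_sub_abs_le_abs_sub (f t) (f τ)
      rwa [abs_sub_comm] at this
    rw [Real.dist_eq, sub_zero] at htf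
    linarith
  have hmono : ε/2 * d ≤ ∫ τ in t..(t+d), |f τ| := by
    have h1 : ∫ τ in t..(t+d), (ε/2) = ε/2 * d := by
      simp; ring
    rw [← h1]
    apply intervalIntegral.integral_mono_on (by linarith) (intervalIntegrable_const) hint2
    intro x hx
    exact hlow x hx
  have hadd : (∫ τ in (0:ℝ)..t, |f τ|) + (∫ τ in t..(t+d), |f τ|)
      = ∫ τ in (0:ℝ)..(t+d), |f τ| :=
    intervalIntegral.integral_add_adjacent_intervals hint1 hint2
  have h1 := hN t htN
  have h2 := hN (t+d) (by linarith)
  rw [Real.dist_eq] at h1 h2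
  have e1 : |(∫ τ in (0:ℝ)..t, |f τ|) - L| < ε*d/4 := h1
  have e2 : |(∫ τ in (0:ℝ)..(t+d), |f τ|) - L| < ε*d/4 := h2
  have := abs_lt.mp e1
  have := abs_lt.mp e2
  have hεd : ε/2 * d = ε*d/2 := by ring
  linarith [abs_lt.mp e1, abs_lt.mp e2]
end

section
/- Under the first-order adaptive control law, if additionally φ ∈ L^∞, then lim_{t→∞} e(t) = 0. -/
open Matrix Filter

local notation "⟪" x ", " y "⟫" => @inner ℝ _ _ x y

open Set Topology MeasureTheory intervalIntegral

/-! The Lyapunov function `V = ⟪e, P e⟫ + γ⁻¹ ‖θ - θ*‖²` satisfies `V' = -⟪e, Q e⟫ ≤ 0` along the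
closed loop, so `e` and `θ - θ*` stay bounded on `[0, ∞)` and `∫₀^∞ ‖e‖² ≤ V(0) / λ_min(Q) < ∞`.
If `φ` is bounded, the error equation bounds `e'`, so `‖e‖²` has a bounded derivative and is
uniformly continuous on `[0, ∞)`; Barbalat's lemma (a nonnegative, uniformly continuous, integrable
function tends to zero) then gives `‖e(t)‖ → 0`. -/

theorem LinearMap.exists_pos_mul_sq_norm_le_inner {E : Type*} [NormedAddCommGroup E]
    [InnerProductSpace ℝ E] [FiniteDimensional ℝ E] (T : E →ₗ[ℝ] E)
    (hT : ∀ x, x ≠ 0 → 0 < ⟪x, T x⟫) :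
    ∃ c > 0, ∀ x, c * ‖x‖ ^ 2 ≤ ⟪x, T x⟫ := by
  rcases subsingleton_or_nontrivial E with hE | hE
  · exact ⟨1, one_pos, fun x => by simp [Subsingleton.elim x 0]⟩
  have hcont : Continuous fun x => ⟪x, T x⟫ :=
    continuous_id.inner T.continuous_of_finiteDimensional
  obtain ⟨u, hu, hmin⟩ := (isCompact_sphere (0 : E) 1).exists_isMinOn
    (NormedSpace.sphere_nonempty.2 zero_le_one) hcont.continuousOn
  have hu1 : ‖u‖ = 1 := by simpa using hu
  refine ⟨⟪u, T u⟫, hT u (norm_ne_zero_iff.1 (by simp [hu1])), fun x => ?_⟩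
  rcases eq_or_ne x 0 with rfl | hx
  · simp
  have hx' : ‖x‖ ≠ 0 := norm_ne_zero_iff.2 hx
  have hsphere : ‖x‖⁻¹ • x ∈ Metric.sphere (0 : E) 1 := by
    simp [norm_smul, inv_mul_cancel₀ hx']
  calc ⟪u, T u⟫ * ‖x‖ ^ 2 ≤ ⟪‖x‖⁻¹ • x, T (‖x‖⁻¹ • x)⟫ * ‖x‖ ^ 2 := by
        gcongr; exact hmin hsphere
    _ = ⟪x, T x⟫ := by
        rw [map_smul, real_inner_smul_left, real_inner_smul_right]
        field_simp

theorem Matrix.PosDef.exists_pos_mul_sq_norm_le_inner {ι : Type*} [Fintype ι] [DecidableEq ι]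
    {P : Matrix ι ι ℝ} (hP : P.PosDef) :
    ∃ c > 0, ∀ x : EuclideanSpace ℝ ι, c * ‖x‖ ^ 2 ≤ ⟪x, toEuclideanLin P x⟫ := by
  refine (toEuclideanLin P).exists_pos_mul_sq_norm_le_inner fun x hx => ?_
  simpa [EuclideanSpace.inner_eq_star_dotProduct, dotProduct_comm] using
    hP.dotProduct_mulVec_pos (x := WithLp.ofLp x) (by simpa using hx)

theorem tendsto_intervalIntegral_add_const_of_nonneg {g : ℝ → ℝ} {C δ : ℝ}
    (hg : ContinuousOn g (Ici 0)) (hg0 : ∀ t ≥ 0, 0 ≤ g t)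
    (hint : ∀ T ≥ 0, ∫ t in (0)..T, g t ≤ C) :
    Tendsto (fun t => ∫ s in t..t + δ, g s) atTop (𝓝 0) := by
  have hIcc : ∀ T, IntegrableOn g (Icc 0 T) := fun T =>
    (hg.mono Icc_subset_Ici_self).integrableOn_Icc
  have hIoi : IntegrableOn g (Ioi 0) := by
    refine integrableOn_Ioi_of_intervalIntegral_norm_bounded C 0
      (fun T => (hIcc T).mono_set Ioc_subset_Icc_self) tendsto_id ?_
    filter_upwards [eventually_ge_atTop 0] with T hT
    refine le_trans (le_of_eq (integral_congr fun t ht => ?_)) (hint T hT)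
    rw [uIcc_of_le hT] at ht
    exact Real.norm_of_nonneg (hg0 t ht.1)
  have hF := intervalIntegral_tendsto_integral_Ioi 0 hIoi tendsto_id
  have hFδ := intervalIntegral_tendsto_integral_Ioi 0 hIoi
    (tendsto_atTop_add_const_right _ δ tendsto_id)
  refine (sub_self (∫ t in Ioi 0, g t) ▸ hFδ.sub hF).congr' ?_
  filter_upwards [eventually_ge_atTop 0, eventually_ge_atTop (-δ)] with t ht htδ
  have hii : ∀ T ≥ 0, IntervalIntegrable g volume 0 T := fun T hT =>
    (intervalIntegrable_iff_integrableOn_Icc_of_le hT).2 (hIcc T)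
  exact integral_interval_sub_left (hii _ (by simp only [id]; linarith)) (hii t ht)

theorem tendsto_zero_of_uniformContinuousOn_of_intervalIntegral_le {g : ℝ → ℝ} {C : ℝ}
    (hg : UniformContinuousOn g (Ici 0)) (hg0 : ∀ t ≥ 0, 0 ≤ g t)
    (hint : ∀ T ≥ 0, ∫ t in (0)..T, g t ≤ C) :
    Tendsto g atTop (𝓝 0) := by
  rw [Metric.tendsto_atTop]
  intro ε hε
  obtain ⟨δ, hδ, hclose⟩ := Metric.uniformContinuousOn_iff.1 hg (ε / 2) (half_pos hε)
  obtain ⟨T, hT⟩ := eventually_atTop.1 <|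
    (tendsto_intervalIntegral_add_const_of_nonneg (δ := δ / 2) hg.continuousOn hg0
      hint).eventually (gt_mem_nhds (by positivity : (0 : ℝ) < δ / 2 * (ε / 2)))
  refine ⟨max T 0, fun t ht => ?_⟩
  have ht0 : 0 ≤ t := le_of_max_le_right ht
  have hlow : ∀ s ∈ Icc t (t + δ / 2), g t - ε / 2 ≤ g s := by
    intro s hs
    have hst : dist s t < δ := by
      rw [Real.dist_eq, abs_of_nonneg (by linarith [hs.1])]
      linarith [hs.2]
    linarith [abs_lt.1 (Real.dist_eq _ _ ▸ hclose s (ht0.trans hs.1) t ht0 hst)]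
  have hgi : IntervalIntegrable g volume t (t + δ / 2) :=
    (hg.continuousOn.mono fun s hs => ht0.trans hs.1).intervalIntegrable_of_Icc (by linarith)
  have hwindow : δ / 2 * (g t - ε / 2) ≤ ∫ s in t..t + δ / 2, g s := by
    have := integral_mono_on (by linarith) intervalIntegrable_const hgi hlow
    rwa [intervalIntegral.integral_const, smul_eq_mul, add_sub_cancel_left] at this
  rw [Real.dist_eq, sub_zero, abs_of_nonneg (hg0 t ht0)]
  nlinarith [hT t (le_of_max_le_left ht)]

theorem integral_le_of_hasDerivAt_neg {V W : ℝ → ℝ} {a b : ℝ}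
    (hV : ∀ t ∈ uIcc a b, HasDerivAt V (-W t) t) (hW : ContinuousOn W (uIcc a b))
    (hVb : 0 ≤ V b) : ∫ t in a..b, W t ≤ V a := by
  have := integral_eq_sub_of_hasDerivAt hV hW.neg.intervalIntegrable
  rw [intervalIntegral.integral_neg] at this
  linarith

theorem Convex.uniformContinuousOn_norm_sq {E : Type*} [NormedAddCommGroup E]
    [InnerProductSpace ℝ E] {f f' : ℝ → E} {s : Set ℝ} {B K : ℝ} (hs : Convex ℝ s)
    (hf : ∀ t ∈ s, HasDerivWithinAt f (f' t) s t)
    (hfB : ∀ t ∈ s, ‖f t‖ ≤ B) (hf'K : ∀ t ∈ s, ‖f' t‖ ≤ K) :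
    UniformContinuousOn (fun t => ‖f t‖ ^ 2) s := by
  refine (hs.lipschitzOnWith_of_nnnorm_hasDerivWithin_le (C := (2 * B * K).toNNReal)
    (fun t ht => (hf t ht).norm_sq) fun t ht => ?_).uniformContinuousOn
  rw [← NNReal.coe_le_coe, coe_nnnorm, Real.coe_toNNReal']
  refine le_max_of_le_left ?_
  calc ‖2 * ⟪f t, f' t⟫‖ ≤ 2 * (‖f t‖ * ‖f' t‖) := by
        rw [norm_mul, Real.norm_two]; gcongr; exact norm_inner_le_norm _ _
    _ ≤ 2 * B * K := by
        rw [mul_assoc]; gcongr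
        · exact (norm_nonneg _).trans (hfB t ht)
        · exact hfB t ht
        · exact hf'K t ht

theorem Matrix.inner_toEuclideanLin_add_of_lyapunov {ι : Type*} [Fintype ι] [DecidableEq ι]
    {A P Q : Matrix ι ι ℝ} (hLyap : Aᵀ * P + P * A = -Q) (x : EuclideanSpace ℝ ι) :
    ⟪toEuclideanLin A x, toEuclideanLin P x⟫ + ⟪x, toEuclideanLin P (toEuclideanLin A x)⟫ =
      -⟪x, toEuclideanLin Q x⟫ := by
  have hsum : toEuclideanLin (Aᵀ * P + P * A) x =
      toEuclideanLin Aᵀ (toEuclideanLin P x) + toEuclideanLin P (toEuclideanLin A x) := by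
    simp
  rw [← LinearMap.adjoint_inner_right (toEuclideanLin A),
    ← toEuclideanLin_conjTranspose_eq_adjoint, conjTranspose_eq_transpose_of_trivial,
    ← inner_add_right, ← hsum, hLyap, map_neg, LinearMap.neg_apply, inner_neg_right]

section AdaptiveLaw

variable {ι F : Type*} [Fintype ι] [DecidableEq ι] [NormedAddCommGroup F]

noncomputable def adaptiveLyapunov (P : Matrix ι ι ℝ) (γ : ℝ) (x : EuclideanSpace ℝ ι) (u : F) :
    ℝ :=
  ⟪x, toEuclideanLin P x⟫ + γ⁻¹ * ‖u‖ ^ 2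

theorem hasDerivAt_adaptiveLyapunov [InnerProductSpace ℝ F] {γ : ℝ} (hγ : γ ≠ 0)
    {A P Q : Matrix ι ι ℝ} (hP : P.IsHermitian) (hLyap : Aᵀ * P + P * A = -Q)
    {b : EuclideanSpace ℝ ι} {φ θ : ℝ → F} {θstar : F} {e : ℝ → EuclideanSpace ℝ ι}
    (he : ∀ t, HasDerivAt e (toEuclideanLin A (e t) + ⟪θ t - θstar, φ t⟫ • b) t)
    (hθ : ∀ t, HasDerivAt θ ((-γ * ⟪e t, toEuclideanLin P b⟫) • φ t) t) (t : ℝ) :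
    HasDerivAt (fun s => adaptiveLyapunov P γ (e s) (θ s - θstar))
      (-⟪e t, toEuclideanLin Q (e t)⟫) t := by
  have hPe := (toEuclideanLin P).toContinuousLinearMap.hasFDerivAt.comp_hasDerivAt t (he t)
  refine ((he t).inner ℝ hPe |>.add
    (((hθ t).sub_const θstar).norm_sq.const_mul γ⁻¹)).congr_deriv ?_
  have hsymm : ⟪b, toEuclideanLin P (e t)⟫ = ⟪e t, toEuclideanLin P b⟫ := by
    rw [← (isSymmetric_toEuclideanLin_iff.2 hP), real_inner_comm]
  simp only [LinearMap.coe_toContinuousLinearMap', Function.comp_apply, map_add, map_smul,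
    inner_add_left, inner_add_right, real_inner_smul_left, real_inner_smul_right, hsymm]
  -- the adaptive law is chosen so that the terms in `⟪θ t - θstar, φ t⟫` cancel
  rw [← inner_toEuclideanLin_add_of_lyapunov hLyap]
  field_simp
  ring

theorem mul_sq_norm_le_adaptiveLyapunov {P : Matrix ι ι ℝ} {γ c : ℝ} (hγ : 0 ≤ γ)
    (hP : ∀ x, c * ‖x‖ ^ 2 ≤ ⟪x, toEuclideanLin P x⟫) (x : EuclideanSpace ℝ ι) (u : F) :
    c * ‖x‖ ^ 2 ≤ adaptiveLyapunov P γ x u :=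
  le_add_of_le_of_nonneg (hP x) (by positivity)

theorem inv_mul_sq_norm_le_adaptiveLyapunov {P : Matrix ι ι ℝ} {γ : ℝ}
    (hP : ∀ x, 0 ≤ ⟪x, toEuclideanLin P x⟫) (x : EuclideanSpace ℝ ι) (u : F) :
    γ⁻¹ * ‖u‖ ^ 2 ≤ adaptiveLyapunov P γ x u :=
  le_add_of_nonneg_left (hP x)

theorem norm_toEuclideanLin_add_inner_smul_le [InnerProductSpace ℝ F] (A : Matrix ι ι ℝ)
    (x b : EuclideanSpace ℝ ι) (u v : F) :
    ‖toEuclideanLin A x + ⟪u, v⟫ • b‖ ≤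
      ‖(toEuclideanLin A).toContinuousLinearMap‖ * ‖x‖ + ‖u‖ * ‖v‖ * ‖b‖ := by
  refine (norm_add_le _ _).trans
    (add_le_add ((toEuclideanLin A).toContinuousLinearMap.le_opNorm x) ?_)
  rw [norm_smul, Real.norm_eq_abs]
  gcongr
  exact abs_real_inner_le_norm u v

theorem adaptiveLaw_bounded_and_sq_integrable [InnerProductSpace ℝ F] {γ : ℝ} (hγ : 0 < γ)
    {A P Q : Matrix ι ι ℝ} (hP : P.PosDef) (hQ : Q.PosDef) (hLyap : Aᵀ * P + P * A = -Q)
    {b : EuclideanSpace ℝ ι} {φ θ : ℝ → F} {θstar : F} {e : ℝ → EuclideanSpace ℝ ι}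
    (he : ∀ t, HasDerivAt e (toEuclideanLin A (e t) + ⟪θ t - θstar, φ t⟫ • b) t)
    (hθ : ∀ t, HasDerivAt θ ((-γ * ⟪e t, toEuclideanLin P b⟫) • φ t) t) :
    ∃ Be Bθ C : ℝ, (∀ t ∈ Ici (0 : ℝ), ‖e t‖ ≤ Be) ∧ (∀ t ∈ Ici (0 : ℝ), ‖θ t - θstar‖ ≤ Bθ) ∧
      ∀ T ≥ 0, ∫ t in (0)..T, ‖e t‖ ^ 2 ≤ C := by
  obtain ⟨cP, hcP, hPlow⟩ := hP.exists_pos_mul_sq_norm_le_inner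
  obtain ⟨cQ, hcQ, hQlow⟩ := hQ.exists_pos_mul_sq_norm_le_inner
  set V := fun t => adaptiveLyapunov P γ (e t) (θ t - θstar)
  have hV := hasDerivAt_adaptiveLyapunov hγ.ne' hP.1 hLyap he hθ
  have hV_nonneg : ∀ t, 0 ≤ V t := fun t =>
    le_trans (by positivity) (mul_sq_norm_le_adaptiveLyapunov hγ.le hPlow (e t) (θ t - θstar))
  have hV_anti : Antitone V := antitone_of_hasDerivAt_nonpos hV fun t =>
    neg_nonpos.2 (le_trans (by positivity) (hQlow (e t)))
  refine ⟨√(V 0 / cP), √(γ * V 0), V 0 / cQ, fun t ht => ?_, fun t ht => ?_, fun T hT => ?_⟩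
  · refine Real.le_sqrt_of_sq_le <| (le_div_iff₀' hcP).2 ?_
    exact (mul_sq_norm_le_adaptiveLyapunov hγ.le hPlow _ _).trans (hV_anti ht)
  · refine Real.le_sqrt_of_sq_le <| (inv_mul_le_iff₀ hγ).1 ?_
    have hPnonneg : ∀ x, 0 ≤ ⟪x, toEuclideanLin P x⟫ := fun x => le_trans (by positivity) (hPlow x)
    exact (inv_mul_sq_norm_le_adaptiveLyapunov hPnonneg _ _).trans (hV_anti ht)
  · have he_cont : Continuous e := continuous_iff_continuousAt.2 fun t => (he t).continuousAt
    have hQe : Continuous fun t => ⟪e t, toEuclideanLin Q (e t)⟫ :=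
      he_cont.inner ((toEuclideanLin Q).continuous_of_finiteDimensional.comp he_cont)
    have hcQe : Continuous fun t => cQ * ‖e t‖ ^ 2 := by fun_prop
    rw [le_div_iff₀' hcQ, ← intervalIntegral.integral_const_mul]
    calc ∫ t in (0)..T, cQ * ‖e t‖ ^ 2
        ≤ ∫ t in (0)..T, ⟪e t, toEuclideanLin Q (e t)⟫ :=
          integral_mono_on hT (hcQe.intervalIntegrable 0 T) (hQe.intervalIntegrable 0 T)
            fun t _ => hQlow (e t)
      _ ≤ V 0 := integral_le_of_hasDerivAt_neg (fun t _ => hV t) hQe.continuousOn (hV_nonneg T)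

end AdaptiveLaw

theorem stmt_7_general {n N : ℕ} (γ : ℝ) (hγ : 0 < γ)
    (A P Q : Matrix (Fin n) (Fin n) ℝ) (hP : P.PosDef) (hQ : Q.PosDef)
    (hLyap : Aᵀ * P + P * A = -Q)
    (b : EuclideanSpace ℝ (Fin n))
    (φ : ℝ → EuclideanSpace ℝ (Fin N))
    (hφ_bdd : ∃ M : ℝ, ∀ t : ℝ, ‖φ t‖ ≤ M)
    (θstar : EuclideanSpace ℝ (Fin N))
    (e : ℝ → EuclideanSpace ℝ (Fin n)) (θ : ℝ → EuclideanSpace ℝ (Fin N))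
    (he : ∀ t : ℝ, HasDerivAt e
      (Matrix.toEuclideanLin A (e t) + ⟪θ t - θstar, φ t⟫ • b) t)
    (hθ : ∀ t : ℝ, HasDerivAt θ
      ((-γ * ⟪e t, Matrix.toEuclideanLin P b⟫) • φ t) t) :
    Tendsto e atTop (nhds (0 : EuclideanSpace ℝ (Fin n))) := by
  obtain ⟨Be, Bθ, C, he_bdd, hθ_bdd, hint⟩ :=
    adaptiveLaw_bounded_and_sq_integrable hγ hP hQ hLyap he hθ
  obtain ⟨M, hM⟩ := hφ_bdd
  have he'_bdd : ∀ t ∈ Ici (0 : ℝ), ‖toEuclideanLin A (e t) + ⟪θ t - θstar, φ t⟫ • b‖ ≤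
      ‖(toEuclideanLin A).toContinuousLinearMap‖ * Be + Bθ * M * ‖b‖ := fun t ht =>
    (norm_toEuclideanLin_add_inner_smul_le A _ b _ _).trans <| by
      gcongr
      exacts [he_bdd t ht, (norm_nonneg _).trans (hθ_bdd 0 self_mem_Ici), hθ_bdd t ht, hM t]
  have hsq := tendsto_zero_of_uniformContinuousOn_of_intervalIntegral_le
    ((convex_Ici 0).uniformContinuousOn_norm_sq (fun t _ => (he t).hasDerivWithinAt)
      he_bdd he'_bdd) (fun _ _ => by positivity) hint
  rw [tendsto_zero_iff_norm_tendsto_zero]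
  simpa using hsq.sqrt

/-- First-order adaptive control law: if additionally `φ ∈ L^∞`, then the tracking
error satisfies `e(t) → 0` as `t → ∞`. -/
theorem stmt_7 {n N : ℕ} (γ : ℝ) (hγ : 0 < γ)
    (A P Q : Matrix (Fin n) (Fin n) ℝ) (hP : P.PosDef) (hQ : Q.PosDef)
    (hLyap : Aᵀ * P + P * A = -Q)
    (b : EuclideanSpace ℝ (Fin n))
    (φ : ℝ → EuclideanSpace ℝ (Fin N)) (hφ : Continuous φ)
    (hφ_bdd : ∃ M : ℝ, ∀ t : ℝ, ‖φ t‖ ≤ M)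
    (θstar : EuclideanSpace ℝ (Fin N))
    (e : ℝ → EuclideanSpace ℝ (Fin n)) (θ : ℝ → EuclideanSpace ℝ (Fin N))
    (he : ∀ t : ℝ, HasDerivAt e
      (Matrix.toEuclideanLin A (e t) + ⟪θ t - θstar, φ t⟫ • b) t)
    (hθ : ∀ t : ℝ, HasDerivAt θ
      ((-γ * ⟪e t, Matrix.toEuclideanLin P b⟫) • φ t) t) :
    Tendsto e atTop (nhds (0 : EuclideanSpace ℝ (Fin n))) :=
  stmt_7_general γ hγ A P Q hP hQ hLyap b φ hφ_bdd θstar e θ he hθ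
end

section
/- Fix β, γ, μ > 0 and a continuously differentiable feature φ : ℝ → ℝ^N. Define N_t = 1 + μ⟨φ(t),φ(t)⟩ and e_y(t) = ⟨θ(t) - θ*, φ(t)⟩. Then the pair of first-order ODEs ϑ'(t) = -γ φ(t) e_y(t), θ'(t) = -β(θ(t) - ϑ(t)) N_t implies that θ satisfies the second-order ODE θ''(t) + [β N_t - N_t'/N_t] θ'(t) = -γ β N_t φ(t) e_y(t). -/
local notation "⟪" x ", " y "⟫" => @inner ℝ _ _ x y

/-! Differentiating `θ' = -βN(θ - ϑ)` once more gives `θ'' = -βN'(θ - ϑ) - βN(θ' - ϑ')`.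
Since `-βN(θ - ϑ) = θ'`, the first term is `(N'/N)θ'` wherever `N ≠ 0`, and the second is
`-βNθ' + βNϑ'`. Substituting `ϑ' = -γφe_y` gives the claim; the normalization
`N = 1 + μ|φ|²` is positive, so dividing by it is harmless. -/

theorem HasDerivAt.neg_mul_smul_sub_of_tuner {E : Type*} [NormedAddCommGroup E]
    [NormedSpace ℝ E] {β N' : ℝ} {N : ℝ → ℝ} {θ ϑ : ℝ → E} {v : E}
    {t : ℝ} (hN : HasDerivAt N N' t) (hN₀ : N t ≠ 0)
    (hθ : HasDerivAt θ ((-(β * N t)) • (θ t - ϑ t)) t) (hϑ : HasDerivAt ϑ v t) :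
    HasDerivAt (fun s => (-(β * N s)) • (θ s - ϑ s))
      (-((β * N t - N' / N t) • ((-(β * N t)) • (θ t - ϑ t))) + (β * N t) • v) t := by
  refine ((hN.const_mul β).neg.smul (hθ.sub hϑ)).congr_deriv ?_
  simp only [Pi.sub_apply, Pi.neg_apply]
  match_scalars <;> field_simp <;> ring

theorem hasDerivAt_one_add_mul_inner_self {F : Type*} [NormedAddCommGroup F]
    [InnerProductSpace ℝ F] {μ : ℝ} {φ : ℝ → F} {φ' : F} {t : ℝ} (hφ : HasDerivAt φ φ' t) :
    HasDerivAt (fun s => 1 + μ * ⟪φ s, φ s⟫) (μ * (⟪φ t, φ'⟫ + ⟪φ', φ t⟫)) t :=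
  ((hφ.inner ℝ hφ).const_mul μ).const_add 1

theorem one_add_mul_inner_self_pos {F : Type*} [NormedAddCommGroup F] [InnerProductSpace ℝ F]
    {μ : ℝ} (hμ : 0 ≤ μ) (x : F) :
    0 < 1 + μ * ⟪x, x⟫ := by
  have := mul_nonneg hμ (real_inner_self_nonneg (x := x))
  linarith

theorem stmt_8_general {d : ℕ} (β γ μ : ℝ) (hμ : 0 < μ)
    (φ φ' : ℝ → EuclideanSpace ℝ (Fin d))
    (hφ : ∀ t : ℝ, HasDerivAt φ (φ' t) t)
    (θstar : EuclideanSpace ℝ (Fin d))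
    (θ ϑ : ℝ → EuclideanSpace ℝ (Fin d))
    (Nt : ℝ → ℝ) (hNt : Nt = fun t => 1 + μ * ⟪φ t, φ t⟫)
    (hϑ : ∀ t : ℝ, HasDerivAt ϑ ((-γ * ⟪θ t - θstar, φ t⟫) • φ t) t)
    (hθ : ∀ t : ℝ, HasDerivAt θ ((-(β * Nt t)) • (θ t - ϑ t)) t) :
    ∀ t : ℝ, HasDerivAt (fun s => (-(β * Nt s)) • (θ s - ϑ s))
      (-((β * Nt t - deriv Nt t / Nt t) • ((-(β * Nt t)) • (θ t - ϑ t)))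
        - (γ * β * Nt t) • (⟪θ t - θstar, φ t⟫ • φ t)) t := by
  intro t
  subst hNt
  have hN := hasDerivAt_one_add_mul_inner_self (μ := μ) (hφ t)
  rw [hN.deriv]
  refine (hN.neg_mul_smul_sub_of_tuner
    (one_add_mul_inner_self_pos hμ.le (φ t)).ne' (hθ t) (hϑ t)).congr_deriv ?_
  module

/-- The pair of first-order ODEs `ϑ' = -γ φ e_y`, `θ' = -β(θ - ϑ)N_t` (with
`N_t = 1 + μ⟨φ,φ⟩` and `e_y = ⟨θ - θ*, φ⟩`) implies that `θ` satisfies the second-order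
ODE `θ'' + [βN_t - N_t'/N_t]θ' = -γβN_t φ e_y`. -/
theorem stmt_8 {d : ℕ} (β γ μ : ℝ) (hβ : 0 < β) (hγ : 0 < γ) (hμ : 0 < μ)
    (φ φ' : ℝ → EuclideanSpace ℝ (Fin d))
    (hφ : ∀ t : ℝ, HasDerivAt φ (φ' t) t) (hφ'c : Continuous φ')
    (θstar : EuclideanSpace ℝ (Fin d))
    (θ ϑ : ℝ → EuclideanSpace ℝ (Fin d))
    (Nt : ℝ → ℝ) (hNt : Nt = fun t => 1 + μ * ⟪φ t, φ t⟫)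
    (hϑ : ∀ t : ℝ, HasDerivAt ϑ ((-γ * ⟪θ t - θstar, φ t⟫) • φ t) t)
    (hθ : ∀ t : ℝ, HasDerivAt θ ((-(β * Nt t)) • (θ t - ϑ t)) t) :
    ∀ t : ℝ, HasDerivAt (fun s => (-(β * Nt s)) • (θ s - ϑ s))
      (-((β * Nt t - deriv Nt t / Nt t) • ((-(β * Nt t)) • (θ t - ϑ t)))
        - (γ * β * Nt t) • (⟪θ t - θstar, φ t⟫ • φ t)) t :=
  stmt_8_general β γ μ hμ φ φ' hφ θstar θ ϑ Nt hNt hϑ hθ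
end

section
/- Let γ, β > 0, set μ = 2γ/β, and define N_t = 1 + μ‖φ(t)‖². Suppose ϑ'(t) = -γ φ(t) e_y(t) and θ'(t) = -β(θ(t) - ϑ(t)) N_t, where e_y(t) = ⟨θ(t) - θ*, φ(t)⟩. Then V(t) = (1/γ)‖ϑ(t) - θ*‖² + (1/γ)‖θ(t) - ϑ(t)‖² satisfies V'(t) ≤ -(2β/γ)‖θ(t) - ϑ(t)‖² - e_y(t)² - (|e_y(t)| - 2‖θ(t)-ϑ(t)‖·‖φ(t)‖)² ≤ 0. -/
local notation "⟪" x ", " y "⟫" => @inner ℝ _ _ x y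

/-- Higher order tuner for time-varying regression with `μ = 2γ/β`:
`V = (1/γ)‖ϑ - θ*‖² + (1/γ)‖θ - ϑ‖²` satisfies
`V' ≤ -(2β/γ)‖θ-ϑ‖² - e_y² - (|e_y| - 2‖θ-ϑ‖‖φ‖)² ≤ 0`. -/
theorem stmt_9 {d : ℕ} (β γ : ℝ) (hβ : 0 < β) (hγ : 0 < γ)
    (φ : ℝ → EuclideanSpace ℝ (Fin d)) (hφ : Continuous φ)
    (θstar : EuclideanSpace ℝ (Fin d))
    (θ ϑ : ℝ → EuclideanSpace ℝ (Fin d))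
    (Nt : ℝ → ℝ) (hNt : Nt = fun t => 1 + (2 * γ / β) * ‖φ t‖ ^ 2)
    (hϑ : ∀ t : ℝ, HasDerivAt ϑ ((-γ * ⟪θ t - θstar, φ t⟫) • φ t) t)
    (hθ : ∀ t : ℝ, HasDerivAt θ ((-(β * Nt t)) • (θ t - ϑ t)) t) :
    ∀ t : ℝ,
      (∀ v : ℝ, HasDerivAt (fun s => (1 / γ) * ‖ϑ s - θstar‖ ^ 2
          + (1 / γ) * ‖θ s - ϑ s‖ ^ 2) v t →
        v ≤ -(2 * β / γ) * ‖θ t - ϑ t‖ ^ 2 - ⟪θ t - θstar, φ t⟫ ^ 2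
          - (|⟪θ t - θstar, φ t⟫| - 2 * ‖θ t - ϑ t‖ * ‖φ t‖) ^ 2) ∧
      -(2 * β / γ) * ‖θ t - ϑ t‖ ^ 2 - ⟪θ t - θstar, φ t⟫ ^ 2
        - (|⟪θ t - θstar, φ t⟫| - 2 * ‖θ t - ϑ t‖ * ‖φ t‖) ^ 2 ≤ 0 := by
  intro t
  set e : ℝ := ⟪θ t - θstar, φ t⟫ with he
  set a : ℝ := ‖θ t - ϑ t‖ with ha
  set p : ℝ := ‖φ t‖ with hp
  have ha0 : 0 ≤ a := norm_nonneg _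
  have hp0 : 0 ≤ p := norm_nonneg _
  constructor
  · intro v hv
    -- compute the derivative of V
    have hA : HasDerivAt (fun s => ϑ s - θstar) ((-γ * e) • φ t) t :=
      (hϑ t).sub_const θstar
    have hB : HasDerivAt (fun s => θ s - ϑ s)
        ((-(β * Nt t)) • (θ t - ϑ t) - (-γ * e) • φ t) t := (hθ t).sub (hϑ t)
    have h1 := hA.inner ℝ hA
    have h2 := hB.inner ℝ hB
    have h1' : HasDerivAt (fun s => ‖ϑ s - θstar‖ ^ 2)
        (⟪ϑ t - θstar, (-γ * e) • φ t⟫ + ⟪(-γ * e) • φ t, ϑ t - θstar⟫) t := by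
      have : (fun s => ⟪ϑ s - θstar, ϑ s - θstar⟫) = fun s => ‖ϑ s - θstar‖ ^ 2 := by
        funext s; rw [real_inner_self_eq_norm_sq]
      rwa [this] at h1
    have h2' : HasDerivAt (fun s => ‖θ s - ϑ s‖ ^ 2)
        (⟪θ t - ϑ t, (-(β * Nt t)) • (θ t - ϑ t) - (-γ * e) • φ t⟫
          + ⟪(-(β * Nt t)) • (θ t - ϑ t) - (-γ * e) • φ t, θ t - ϑ t⟫) t := by
      have : (fun s => ⟪θ s - ϑ s, θ s - ϑ s⟫) = fun s => ‖θ s - ϑ s‖ ^ 2 := by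
        funext s; rw [real_inner_self_eq_norm_sq]
      rwa [this] at h2
    have hV := (h1'.const_mul (1 / γ)).add (h2'.const_mul (1 / γ))
    have hvv := hv.unique hV
    set c : ℝ := ⟪θ t - ϑ t, φ t⟫ with hc
    have hA1 : ⟪ϑ t - θstar, φ t⟫ = e - c := by
      rw [he, hc, ← inner_sub_left]; congr 1; abel
    have i1 : ⟪ϑ t - θstar, (-γ * e) • φ t⟫ = (-γ * e) * (e - c) := by
      rw [real_inner_smul_right, hA1]
    have i2 : ⟪(-γ * e) • φ t, ϑ t - θstar⟫ = (-γ * e) * (e - c) := by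
      rw [real_inner_smul_left, real_inner_comm, hA1]
    have i3 : ⟪θ t - ϑ t, (-(β * Nt t)) • (θ t - ϑ t) - (-γ * e) • φ t⟫
        = (-(β * Nt t)) * a ^ 2 - (-γ * e) * c := by
      rw [inner_sub_right, real_inner_smul_right, real_inner_smul_right,
        real_inner_self_eq_norm_sq, ← ha, ← hc]
    have i4 : ⟪(-(β * Nt t)) • (θ t - ϑ t) - (-γ * e) • φ t, θ t - ϑ t⟫
        = (-(β * Nt t)) * a ^ 2 - (-γ * e) * c := by
      rw [inner_sub_left, real_inner_smul_left, real_inner_smul_left,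
        real_inner_self_eq_norm_sq, real_inner_comm (θ t - ϑ t) (φ t), ← ha, ← hc]
    have hNtt : Nt t = 1 + (2 * γ / β) * p ^ 2 := by rw [hNt]
    have hv2 : v = -(2 * β / γ) * a ^ 2 - 2 * e ^ 2 + 4 * e * c - 4 * p ^ 2 * a ^ 2 := by
      rw [hvv, i1, i2, i3, i4, hNtt]
      field_simp
      ring
    have hcs : |c| ≤ a * p := by
      rw [hc, ha, hp]; exact abs_real_inner_le_norm _ _
    have hec : e * c ≤ |e| * (a * p) := by
      calc e * c ≤ |e * c| := le_abs_self _
        _ = |e| * |c| := abs_mul _ _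
        _ ≤ |e| * (a * p) := mul_le_mul_of_nonneg_left hcs (abs_nonneg e)
    have habs : |e| ^ 2 = e ^ 2 := sq_abs e
    rw [hv2]
    nlinarith [hec, habs]
  · have h1 : 0 ≤ 2 * β / γ * a ^ 2 := by positivity
    nlinarith [sq_nonneg e, sq_nonneg (|e| - 2 * a * p)]
end

section
/- Under the higher order tuner for time-varying regression with μ = 2γ/β, for all T ≥ 0: ∫₀^T e_y(t)² dt ≤ V(0) = (1/γ)‖ϑ(0) - θ*‖² + (1/γ)‖θ(0) - ϑ(0)‖². That is, the continuous-time regret ∫₀^T ‖e_y‖² is bounded by a constant independent of T. -/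
local notation "⟪" x ", " y "⟫" => @inner ℝ _ _ x y

/-! Along the flow, `V = (1/γ)‖ϑ - θ*‖² + (1/γ)‖θ - ϑ‖²` satisfies `e_y² ≤ -V'`: expanding,
`-V' - e_y²` is a square plus `(2β/γ)‖θ - ϑ‖²` plus the Cauchy–Schwarz defect
`4(‖θ - ϑ‖²‖φ‖² - ⟪θ - ϑ, φ⟫²)`; the normalisation `1 + (2γ/β)‖φ‖²` is exactly what absorbs the
cross term. Integrating over `[0, T]` and dropping `V(T) ≥ 0` bounds the regret by `V(0)`. -/

open Set MeasureTheory

theorem integral_le_sub_of_hasDerivAt_of_le_neg_deriv {f V V' : ℝ → ℝ} {a b : ℝ} (hab : a ≤ b)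
    (hf : IntegrableOn f (Icc a b)) (hV : ∀ t, HasDerivAt V (V' t) t)
    (hfV : ∀ t, f t ≤ -V' t) :
    ∫ t in a..b, f t ≤ V a - V b := by
  have hVc : Continuous V := continuous_iff_continuousAt.2 fun t => (hV t).continuousAt
  have := intervalIntegral.integral_le_sub_of_hasDeriv_right_of_le hab (hVc.neg.continuousOn)
    (fun t _ => (hV t).neg.hasDerivWithinAt) hf (fun t _ => hfV t)
  simp only [Pi.neg_apply] at this
  linarith

section HigherOrderTuner

variable {E : Type*} [NormedAddCommGroup E]

noncomputable def tunerLyapunov (γ : ℝ) (θstar ϑ θ : E) : ℝ :=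
  1 / γ * ‖ϑ - θstar‖ ^ 2 + 1 / γ * ‖θ - ϑ‖ ^ 2

theorem tunerLyapunov_nonneg {γ : ℝ} (hγ : 0 ≤ γ) (θstar ϑ θ : E) :
    0 ≤ tunerLyapunov γ θstar ϑ θ := by
  unfold tunerLyapunov
  positivity

theorem hasDerivAt_tunerLyapunov [InnerProductSpace ℝ E] (γ : ℝ) (θstar : E) {ϑ θ : ℝ → E}
    {ϑ' θ' : E} {t : ℝ}
    (hϑ : HasDerivAt ϑ ϑ' t) (hθ : HasDerivAt θ θ' t) :
    HasDerivAt (fun s => tunerLyapunov γ θstar (ϑ s) (θ s))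
      (1 / γ * (2 * ⟪ϑ t - θstar, ϑ'⟫) + 1 / γ * (2 * ⟪θ t - ϑ t, θ' - ϑ'⟫)) t :=
  ((hϑ.sub_const θstar).norm_sq.const_mul _).add (((hθ.sub hϑ).norm_sq).const_mul _)

theorem sq_inner_le_neg_tunerLyapunov_deriv [InnerProductSpace ℝ E] {β γ : ℝ} (hβ : 0 < β)
    (hγ : 0 < γ) (θstar ϑ θ φ : E) :
    ⟪θ - θstar, φ⟫ ^ 2 ≤
      -(1 / γ * (2 * ⟪ϑ - θstar, (-γ * ⟪θ - θstar, φ⟫) • φ⟫)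
        + 1 / γ * (2 * ⟪θ - ϑ, (-(β * (1 + 2 * γ / β * ‖φ‖ ^ 2))) • (θ - ϑ)
            - (-γ * ⟪θ - θstar, φ⟫) • φ⟫)) := by
  set e := ⟪θ - θstar, φ⟫
  set a := ⟪θ - ϑ, φ⟫
  have hsplit : ⟪ϑ - θstar, φ⟫ = e - a := by
    rw [show ϑ - θstar = (θ - θstar) - (θ - ϑ) by abel, inner_sub_left]
  have hCS : a ^ 2 ≤ ‖θ - ϑ‖ ^ 2 * ‖φ‖ ^ 2 := by
    rw [← mul_pow, ← sq_abs]
    exact pow_le_pow_left₀ (abs_nonneg _) (abs_real_inner_le_norm _ _) 2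
  rw [inner_sub_right, real_inner_smul_right, real_inner_smul_right, real_inner_smul_right,
    real_inner_self_eq_norm_sq, hsplit]
  have hβγ : 0 ≤ β / γ * ‖θ - ϑ‖ ^ 2 := by positivity
  have hexpand : -(1 / γ * (2 * (-γ * e * (e - a)))
      + 1 / γ * (2 * (-(β * (1 + 2 * γ / β * ‖φ‖ ^ 2)) * ‖θ - ϑ‖ ^ 2 - -γ * e * a))) - e ^ 2
      = (e - 2 * a) ^ 2 + 4 * (‖θ - ϑ‖ ^ 2 * ‖φ‖ ^ 2 - a ^ 2) + 2 * (β / γ * ‖θ - ϑ‖ ^ 2) := by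
    field_simp
    ring
  linarith [sq_nonneg (e - 2 * a)]

end HigherOrderTuner

/-- Higher order tuner for time-varying regression with `μ = 2γ/β`: constant regret,
`∫₀^T e_y² ≤ V(0) = (1/γ)‖ϑ(0) - θ*‖² + (1/γ)‖θ(0) - ϑ(0)‖²` for all `T ≥ 0`. -/
theorem stmt_10 {d : ℕ} (β γ : ℝ) (hβ : 0 < β) (hγ : 0 < γ)
    (φ : ℝ → EuclideanSpace ℝ (Fin d)) (hφ : Continuous φ)
    (θstar : EuclideanSpace ℝ (Fin d))
    (θ ϑ : ℝ → EuclideanSpace ℝ (Fin d))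
    (Nt : ℝ → ℝ) (hNt : Nt = fun t => 1 + (2 * γ / β) * ‖φ t‖ ^ 2)
    (hϑ : ∀ t : ℝ, HasDerivAt ϑ ((-γ * ⟪θ t - θstar, φ t⟫) • φ t) t)
    (hθ : ∀ t : ℝ, HasDerivAt θ ((-(β * Nt t)) • (θ t - ϑ t)) t) :
    ∀ T : ℝ, 0 ≤ T →
      ∫ t in (0 : ℝ)..T, ⟪θ t - θstar, φ t⟫ ^ 2
        ≤ (1 / γ) * ‖ϑ 0 - θstar‖ ^ 2 + (1 / γ) * ‖θ 0 - ϑ 0‖ ^ 2 := by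
  intro T hT
  subst hNt
  have hθc : Continuous θ := continuous_iff_continuousAt.2 fun t => (hθ t).continuousAt
  have he : Continuous fun t => ⟪θ t - θstar, φ t⟫ ^ 2 :=
    ((hθc.sub continuous_const).inner hφ).pow 2
  have hregret := integral_le_sub_of_hasDerivAt_of_le_neg_deriv hT he.integrableOn_Icc
    (fun t => hasDerivAt_tunerLyapunov γ θstar (hϑ t) (hθ t))
    (fun t => sq_inner_le_neg_tunerLyapunov_deriv hβ hγ θstar (ϑ t) (θ t) (φ t))
  have hVT := tunerLyapunov_nonneg hγ.le θstar (ϑ T) (θ T)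
  exact hregret.trans (sub_le_self _ hVT)
end

section
/- Under the higher order tuner for time-varying regression with μ = 2γ/β, the filtered mismatch satisfies ∫₀^∞ ‖θ(t) - ϑ(t)‖² dt ≤ γ V(0)/(2β), where V(0) = (1/γ)‖ϑ(0)-θ*‖² + (1/γ)‖θ(0)-ϑ(0)‖². In particular, as β → ∞ this L² norm tends to 0. -/
open MeasureTheory

local notation "⟪" x ", " y "⟫" => @inner ℝ _ _ x y

/-- Higher order tuner for time-varying regression with `μ = 2γ/β`: the filtered
mismatch satisfies `∫₀^∞ ‖θ - ϑ‖² ≤ γ V(0)/(2β)`. -/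
theorem stmt_11 {d : ℕ} (β γ : ℝ) (hβ : 0 < β) (hγ : 0 < γ)
    (φ : ℝ → EuclideanSpace ℝ (Fin d)) (hφ : Continuous φ)
    (θstar : EuclideanSpace ℝ (Fin d))
    (θ ϑ : ℝ → EuclideanSpace ℝ (Fin d))
    (Nt : ℝ → ℝ) (hNt : Nt = fun t => 1 + (2 * γ / β) * ‖φ t‖ ^ 2)
    (hϑ : ∀ t : ℝ, HasDerivAt ϑ ((-γ * ⟪θ t - θstar, φ t⟫) • φ t) t)
    (hθ : ∀ t : ℝ, HasDerivAt θ ((-(β * Nt t)) • (θ t - ϑ t)) t) :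
    IntegrableOn (fun t => ‖θ t - ϑ t‖ ^ 2) (Set.Ioi 0) ∧
    ∫ t in Set.Ioi (0 : ℝ), ‖θ t - ϑ t‖ ^ 2
      ≤ γ * ((1 / γ) * ‖ϑ 0 - θstar‖ ^ 2 + (1 / γ) * ‖θ 0 - ϑ 0‖ ^ 2) / (2 * β) := by
  set a : ℝ → EuclideanSpace ℝ (Fin d) := fun t => ϑ t - θstar with ha
  set b : ℝ → EuclideanSpace ℝ (Fin d) := fun t => θ t - ϑ t with hb
  set e : ℝ → ℝ := fun t => ⟪θ t - θstar, φ t⟫ with he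
  have ha' : ∀ t, HasDerivAt a ((-γ * e t) • φ t) t := fun t => (hϑ t).sub_const θstar
  have hb' : ∀ t, HasDerivAt b ((-(β * Nt t)) • b t - (-γ * e t) • φ t) t :=
    fun t => (hθ t).sub (hϑ t)
  have hθc : Continuous θ := continuous_iff_continuousAt.mpr fun t => (hθ t).continuousAt
  have hϑc : Continuous ϑ := continuous_iff_continuousAt.mpr fun t => (hϑ t).continuousAt
  have hbc : Continuous fun t => ‖b t‖ ^ 2 := ((hθc.sub hϑc).norm.pow 2)
  set C : ℝ := γ * ((1 / γ) * ‖ϑ 0 - θstar‖ ^ 2 + (1 / γ) * ‖θ 0 - ϑ 0‖ ^ 2) / (2 * β) with hC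
  have hint : ∀ t : ℝ, IntervalIntegrable (fun s => ‖b s‖ ^ 2) volume 0 t :=
    fun t => hbc.intervalIntegrable 0 t
  set F : ℝ → ℝ := fun t =>
    (1 / γ) * (⟪a t, a t⟫ + ⟪b t, b t⟫) + (2 * β / γ) * ∫ s in (0:ℝ)..t, ‖b s‖ ^ 2 with hF
  set D : ℝ → ℝ := fun t =>
    (1 / γ) * ((⟪a t, (-γ * e t) • φ t⟫ + ⟪(-γ * e t) • φ t, a t⟫) +
      (⟪b t, (-(β * Nt t)) • b t - (-γ * e t) • φ t⟫ +
        ⟪(-(β * Nt t)) • b t - (-γ * e t) • φ t, b t⟫)) +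
    (2 * β / γ) * ‖b t‖ ^ 2 with hD
  have hI : ∀ t : ℝ, HasDerivAt (fun u => ∫ s in (0:ℝ)..u, ‖b s‖ ^ 2) (‖b t‖ ^ 2) t := by
    intro t
    exact intervalIntegral.integral_hasDerivAt_right (hint t)
      (hbc.stronglyMeasurableAtFilter _ _) hbc.continuousAt
  have hFd : ∀ t, HasDerivAt F (D t) t := by
    intro t
    exact (((HasDerivAt.inner (𝕜 := ℝ) (ha' t) (ha' t)).add
      (HasDerivAt.inner (𝕜 := ℝ) (hb' t) (hb' t))).const_mul (1 / γ)).add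
      ((hI t).const_mul (2 * β / γ))
  have hDle : ∀ t, D t ≤ 0 := by
    intro t
    have habe : e t = ⟪a t, φ t⟫ + ⟪b t, φ t⟫ := by
      rw [he, ← inner_add_left]
      congr 1
      simp only [ha, hb]
      abel
    have hcs := real_inner_mul_inner_self_le (b t) (φ t)
    have hφsq : ⟪φ t, φ t⟫ = ‖φ t‖ ^ 2 := real_inner_self_eq_norm_sq _
    have hbsq : ⟪b t, b t⟫ = ‖b t‖ ^ 2 := real_inner_self_eq_norm_sq _
    have hcomm1 : ⟪φ t, a t⟫ = ⟪a t, φ t⟫ := real_inner_comm _ _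
    have hcomm2 : ⟪φ t, b t⟫ = ⟪b t, φ t⟫ := real_inner_comm _ _
    simp only [hD, hNt, inner_sub_left, inner_sub_right, real_inner_smul_left,
      real_inner_smul_right, hcomm1, hcomm2, hbsq, habe]
    set P := ⟪a t, φ t⟫
    set Q := ⟪b t, φ t⟫
    rw [hbsq, hφsq] at hcs
    have hS : (0:ℝ) ≤ ‖φ t‖ ^ 2 := by positivity
    have hB : (0:ℝ) ≤ ‖b t‖ ^ 2 := by positivity
    have key : -2 * P ^ 2 + 2 * Q ^ 2 - 4 * (‖φ t‖ ^ 2 * ‖b t‖ ^ 2) ≤ 0 := by nlinarith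
    have hγ' : γ ≠ 0 := hγ.ne'
    have hβ' : β ≠ 0 := hβ.ne'
    have expand : 1 / γ *
          (-γ * (P + Q) * P + -γ * (P + Q) * P +
            (-(β * (1 + 2 * γ / β * ‖φ t‖ ^ 2)) * ‖b t‖ ^ 2 - -γ * (P + Q) * Q +
              (-(β * (1 + 2 * γ / β * ‖φ t‖ ^ 2)) * ‖b t‖ ^ 2 - -γ * (P + Q) * Q))) +
        2 * β / γ * ‖b t‖ ^ 2 = -2 * P ^ 2 + 2 * Q ^ 2 - 4 * (‖φ t‖ ^ 2 * ‖b t‖ ^ 2) := by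
      field_simp
      ring
    exact le_of_eq_of_le expand key
  have hanti : Antitone F :=
    antitone_of_deriv_nonpos (fun t => (hFd t).differentiableAt)
      (fun t => by rw [(hFd t).deriv]; exact hDle t)
  have hV0 : F 0 = (1 / γ) * ‖ϑ 0 - θstar‖ ^ 2 + (1 / γ) * ‖θ 0 - ϑ 0‖ ^ 2 := by
    simp only [hF, intervalIntegral.integral_same, mul_zero, add_zero,
      real_inner_self_eq_norm_sq]
    ring
  have hbound : ∀ T : ℝ, 0 ≤ T → ∫ s in (0:ℝ)..T, ‖b s‖ ^ 2 ≤ C := by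
    intro T hT
    have h1 : F T ≤ F 0 := hanti hT
    have h2 : 0 ≤ (1 / γ) * (⟪a T, a T⟫ + ⟪b T, b T⟫) := by
      have := real_inner_self_nonneg (x := a T)
      have := real_inner_self_nonneg (x := b T)
      positivity
    rw [hV0] at h1
    simp only [hF] at h1
    set I := ∫ s in (0:ℝ)..T, ‖b s‖ ^ 2
    set V0 := (1 / γ) * ‖ϑ 0 - θstar‖ ^ 2 + (1 / γ) * ‖θ 0 - ϑ 0‖ ^ 2
    have h3 : 2 * β / γ * I ≤ V0 := by linarith
    have h4 : γ * (2 * β / γ * I) ≤ γ * V0 := mul_le_mul_of_nonneg_left h3 hγ.le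
    rw [hC, le_div_iff₀ (by positivity : (0:ℝ) < 2 * β)]
    have : γ * (2 * β / γ * I) = I * (2 * β) := by field_simp
    linarith [this ▸ h4]
  have hintOn : IntegrableOn (fun t => ‖θ t - ϑ t‖ ^ 2) (Set.Ioi 0) := by
    apply integrableOn_Ioi_of_intervalIntegral_norm_bounded C 0
      (fun i : ℝ => (hbc.integrableOn_Ioc)) Filter.tendsto_id
    filter_upwards [Filter.eventually_ge_atTop (0:ℝ)] with i hi
    simp only [id_eq]
    have : (∫ x in (0:ℝ)..i, ‖(‖b x‖ ^ 2)‖) = ∫ x in (0:ℝ)..i, ‖b x‖ ^ 2 := by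
      congr 1
      ext x
      rw [Real.norm_of_nonneg (by positivity)]
    rw [this]
    exact hbound i hi
  refine ⟨hintOn, ?_⟩
  have htend := intervalIntegral_tendsto_integral_Ioi 0 hintOn Filter.tendsto_id
  refine le_of_tendsto htend ?_
  filter_upwards [Filter.eventually_ge_atTop (0:ℝ)] with i hi
  exact hbound i hi
end

section
/- Under the higher order tuner for time-varying regression with μ = 2γ/β, if in addition φ and φ' are bounded, then e_y(t) → 0, θ(t) - ϑ(t) → 0, ϑ'(t) → 0, and θ'(t) → 0 as t → ∞. -/
open Filter

local notation "⟪" x ", " y "⟫" => @inner ℝ _ _ x y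

open Asymptotics MeasureTheory Set Topology

/-!
Along a solution, `V = ‖ϑ - θ*‖² + ‖θ - ϑ‖²` satisfies `V' ≤ -D` with
`D = γ e_y² + 2β ‖θ - ϑ‖²`: with the normalization `μ = 2γ/β` the cross terms are absorbed by
completing a square and Cauchy–Schwarz. So `V` is bounded and `D` is integrable on `[0, ∞)`.
Boundedness of `V`, `φ` and `φ'` bounds `D'`, so `D` is uniformly continuous and Barbalat's lemma
gives `D → 0`, i.e. `e_y → 0` and `θ - ϑ → 0`; the derivatives are these times bounded factors.
-/

theorem tendsto_intervalIntegral_add_atTop {E : Type*} [NormedAddCommGroup E] [NormedSpace ℝ E]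
    {f : ℝ → E} {a : ℝ} (hf : IntegrableOn f (Ioi a)) (c : ℝ) :
    Tendsto (fun t => ∫ s in t..t + c, f s) atTop (𝓝 0) := by
  have hF := intervalIntegral_tendsto_integral_Ioi a hf tendsto_id
  have hdiff := (hF.comp (tendsto_atTop_add_const_right _ c tendsto_id)).sub hF
  rw [sub_self] at hdiff
  dsimp only [Function.comp, id] at hdiff
  refine hdiff.congr' ?_
  filter_upwards [eventually_ge_atTop a, eventually_ge_atTop (a - c)] with t hat hact
  have hii : ∀ u, a ≤ u → IntervalIntegrable f volume a u := fun u hu =>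
    (intervalIntegrable_iff_integrableOn_Ioc_of_le hu).2 (hf.mono_set Ioc_subset_Ioi_self)
  exact intervalIntegral.integral_interval_sub_left (hii _ (by linarith)) (hii t hat)

theorem tendsto_zero_of_uniformContinuousOn_of_integrableOn {E : Type*} [NormedAddCommGroup E]
    {f : ℝ → E} {a : ℝ} (hu : UniformContinuousOn f (Ici a)) (hi : IntegrableOn f (Ioi a)) :
    Tendsto f atTop (𝓝 0) := by
  refine Metric.tendsto_atTop.2 fun ε hε => ?_
  obtain ⟨δ, hδ, hclose⟩ := Metric.uniformContinuousOn_iff.1 hu (ε / 2) (half_pos hε)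
  set c := δ / 2
  have hc : 0 < c := half_pos hδ
  have hcδ : c < δ := half_lt_self hδ
  obtain ⟨T, hT⟩ := (((tendsto_intervalIntegral_add_atTop hi.norm c).eventually
    (gt_mem_nhds (by positivity : 0 < c * (ε / 2)))).and
      (eventually_ge_atTop a)).exists_forall_of_atTop
  refine ⟨T, fun t ht => ?_⟩
  obtain ⟨hsmall, hat⟩ := hT t ht
  -- `‖f‖` stays above `‖f t‖ - ε / 2` on `[t, t + c]`, while its integral there is `< c ε / 2`.
  have hnear : ∀ s ∈ Icc t (t + c), ‖f t‖ - ε / 2 ≤ ‖f s‖ := by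
    intro s hs
    have hst : dist (f t) (f s) < ε / 2 := hclose t hat s (hat.trans hs.1) <| by
      rw [Real.dist_eq, abs_of_nonpos (by linarith [hs.1])]; linarith [hs.2]
    linarith [norm_sub_norm_le (f t) (f s), dist_eq_norm (f t) (f s)]
  have hlow : c * (‖f t‖ - ε / 2) ≤ ∫ s in t..t + c, ‖f s‖ := by
    have hint : IntervalIntegrable (fun s => ‖f s‖) volume t (t + c) :=
      (intervalIntegrable_iff_integrableOn_Ioc_of_le (by linarith)).2
        (IntegrableOn.mono_set hi.norm fun s hs => lt_of_le_of_lt hat hs.1)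
    have h := intervalIntegral.integral_mono_on (by linarith) intervalIntegrable_const hint hnear
    rwa [intervalIntegral.integral_const, smul_eq_mul, add_sub_cancel_left] at h
  rw [dist_zero_right]
  nlinarith

theorem eventually_uniformContinuousOn_Ici_of_hasDerivAt {E : Type*} [NormedAddCommGroup E]
    [NormedSpace ℝ E] {f f' : ℝ → E} (hd : ∀ t, HasDerivAt f (f' t) t)
    (hf' : f' =O[atTop] fun _ => (1 : ℝ)) : ∀ᶠ a in atTop, UniformContinuousOn f (Ici a) := by
  obtain ⟨C, hC⟩ := hf'.bound
  obtain ⟨T, hT⟩ := eventually_atTop.1 hC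
  filter_upwards [eventually_ge_atTop T] with a ha
  refine ((convex_Ici a).lipschitzOnWith_of_nnnorm_hasDerivWithin_le (C := C.toNNReal)
    (fun t _ => (hd t).hasDerivWithinAt) fun t ht => ?_).uniformContinuousOn
  simpa using Real.toNNReal_le_toNNReal (hT t (ha.trans ht))

theorem tendsto_zero_of_integrableOn_of_hasDerivAt {E : Type*} [NormedAddCommGroup E]
    [NormedSpace ℝ E] {f f' : ℝ → E} {a : ℝ} (hi : IntegrableOn f (Ioi a))
    (hd : ∀ t, HasDerivAt f (f' t) t) (hf' : f' =O[atTop] fun _ => (1 : ℝ)) :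
    Tendsto f atTop (𝓝 0) := by
  obtain ⟨b, hb, hab⟩ :=
    ((eventually_uniformContinuousOn_Ici_of_hasDerivAt hd hf').and (eventually_ge_atTop a)).exists
  exact tendsto_zero_of_uniformContinuousOn_of_integrableOn hb (hi.mono_set (Ioi_subset_Ioi hab))

theorem isBigO_one_inner {α F : Type*} [NormedAddCommGroup F] [InnerProductSpace ℝ F]
    {l : Filter α} {u v : α → F} (hu : u =O[l] fun _ => (1 : ℝ)) (hv : v =O[l] fun _ => (1 : ℝ)) :
    (fun x => ⟪u x, v x⟫) =O[l] fun _ => (1 : ℝ) := by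
  have huv := hu.norm_left.mul hv.norm_left
  simp only [mul_one] at huv
  refine IsBigO.trans (IsBigO.of_bound' (Eventually.of_forall fun x => by
    simpa using abs_real_inner_le_norm (u x) (v x))) huv

theorem isBigO_one_of_norm_sq_le {α E : Type*} [NormedAddCommGroup E] {l : Filter α}
    {f : α → E} {C : ℝ} (hf : ∀ᶠ x in l, ‖f x‖ ^ 2 ≤ C) : f =O[l] fun _ => (1 : ℝ) :=
  IsBigO.of_bound √C (hf.mono fun x hx => by simpa using Real.le_sqrt_of_sq_le hx)

theorem tendsto_zero_of_mul_norm_sq_le {α E : Type*} [NormedAddCommGroup E] {l : Filter α}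
    {f : α → E} {g : α → ℝ} {c : ℝ} (hc : 0 < c) (hfg : ∀ x, c * ‖f x‖ ^ 2 ≤ g x)
    (hg : Tendsto g l (𝓝 0)) : Tendsto f l (𝓝 0) := by
  refine squeeze_zero_norm (fun x => Real.le_sqrt_of_sq_le ?_)
    (by simpa using (hg.div_const c).sqrt)
  rw [le_div_iff₀ hc, mul_comm]
  exact hfg x

theorem isBigO_neg_mul_one_add_mul_norm_sq {α E : Type*} [NormedAddCommGroup E] {l : Filter α}
    {f : α → E} (hf : f =O[l] fun _ => (1 : ℝ)) (a b : ℝ) :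
    (fun x => -(a * (1 + b * ‖f x‖ ^ 2))) =O[l] fun _ => (1 : ℝ) := by
  have hf2 := hf.norm_left.pow 2
  simp only [one_pow] at hf2
  exact (((isBigO_refl _ _).add (hf2.const_mul_left b)).const_mul_left a).neg_left

section Tuner

variable {E : Type*} [NormedAddCommGroup E] [InnerProductSpace ℝ E]

/-- With `e = ⟪x - z, v⟫` and `q = ⟪x - y, v⟫` the left side equals
`-γ (e - 2q)² - 4γ (‖x - y‖² ‖v‖² - q²)`. -/
theorem tuner_lyapunov_deriv_add_dissipation_nonpos {β γ : ℝ} (hβ : β ≠ 0) (hγ : 0 ≤ γ)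
    (x y z v : E) :
    2 * ⟪y - z, (-γ * ⟪x - z, v⟫) • v⟫ +
      2 * ⟪x - y, (-(β * (1 + 2 * γ / β * ‖v‖ ^ 2))) • (x - y) - (-γ * ⟪x - z, v⟫) • v⟫ +
      (γ * ⟪x - z, v⟫ ^ 2 + 2 * β * ‖x - y‖ ^ 2) ≤ 0 := by
  have hsplit : ⟪y - z, v⟫ = ⟪x - z, v⟫ - ⟪x - y, v⟫ := by
    rw [← inner_sub_left, sub_sub_sub_cancel_left]
  have hcs : ⟪x - y, v⟫ ^ 2 ≤ ‖x - y‖ ^ 2 * ‖v‖ ^ 2 := by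
    rw [← mul_pow]; exact sq_le_sq' (neg_le_of_abs_le (abs_real_inner_le_norm _ _))
      (le_of_abs_le (abs_real_inner_le_norm _ _))
  have hgain : β * (1 + 2 * γ / β * ‖v‖ ^ 2) = β + 2 * γ * ‖v‖ ^ 2 := by field_simp
  rw [inner_sub_right, real_inner_smul_right, real_inner_smul_right, real_inner_smul_right,
    real_inner_self_eq_norm_sq, hsplit, hgain]
  nlinarith [mul_nonneg hγ (sq_nonneg (⟪x - z, v⟫ - 2 * ⟪x - y, v⟫)),
    mul_nonneg hγ (sub_nonneg.2 hcs)]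

structure HigherOrderTuner (β γ : ℝ) (φ : ℝ → E) (θstar : E) (θ ϑ : ℝ → E) : Prop where
  hasDerivAt_ϑ : ∀ t, HasDerivAt ϑ ((-γ * ⟪θ t - θstar, φ t⟫) • φ t) t
  hasDerivAt_θ : ∀ t, HasDerivAt θ ((-(β * (1 + 2 * γ / β * ‖φ t‖ ^ 2))) • (θ t - ϑ t)) t

def lyapunov (θstar : E) (θ ϑ : ℝ → E) (t : ℝ) : ℝ := ‖ϑ t - θstar‖ ^ 2 + ‖θ t - ϑ t‖ ^ 2

def dissipation (β γ : ℝ) (φ : ℝ → E) (θstar : E) (θ ϑ : ℝ → E) (t : ℝ) : ℝ :=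
  γ * ⟪θ t - θstar, φ t⟫ ^ 2 + 2 * β * ‖θ t - ϑ t‖ ^ 2

namespace HigherOrderTuner

variable {β γ : ℝ} {φ φ' θ ϑ : ℝ → E} {θstar : E}

theorem continuous_dissipation (h : HigherOrderTuner β γ φ θstar θ ϑ) (hφ : Continuous φ) :
    Continuous (dissipation β γ φ θstar θ ϑ) := by
  have hθ : Continuous θ := continuous_iff_continuousAt.2 fun t => (h.hasDerivAt_θ t).continuousAt
  have hϑ : Continuous ϑ := continuous_iff_continuousAt.2 fun t => (h.hasDerivAt_ϑ t).continuousAt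
  unfold dissipation
  fun_prop

theorem lyapunov_add_integral_dissipation_le (h : HigherOrderTuner β γ φ θstar θ ϑ) (hβ : β ≠ 0)
    (hγ : 0 ≤ γ) (hφ : Continuous φ) {t : ℝ} (ht : 0 ≤ t) :
    lyapunov θstar θ ϑ t + ∫ s in (0 : ℝ)..t, dissipation β γ φ θstar θ ϑ s ≤
      lyapunov θstar θ ϑ 0 := by
  have hD := h.continuous_dissipation hφ
  have hanti : Antitone fun t =>
      lyapunov θstar θ ϑ t + ∫ s in (0 : ℝ)..t, dissipation β γ φ θstar θ ϑ s :=
    antitone_of_hasDerivAt_nonpos (fun t =>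
      ((((h.hasDerivAt_ϑ t).sub_const θstar).norm_sq.add
        ((h.hasDerivAt_θ t).sub (h.hasDerivAt_ϑ t)).norm_sq).add
        (intervalIntegral.integral_hasDerivAt_right (hD.intervalIntegrable _ _)
          (hD.stronglyMeasurableAtFilter _ _) hD.continuousAt)))
      fun t => tuner_lyapunov_deriv_add_dissipation_nonpos hβ hγ _ _ _ _
  simpa using hanti ht

theorem dissipation_nonneg (hβ : 0 ≤ β) (hγ : 0 ≤ γ) (t : ℝ) :
    0 ≤ dissipation β γ φ θstar θ ϑ t := by
  unfold dissipation; positivity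

theorem lyapunov_le (h : HigherOrderTuner β γ φ θstar θ ϑ) (hβ : 0 < β) (hγ : 0 ≤ γ)
    (hφ : Continuous φ) {t : ℝ} (ht : 0 ≤ t) : lyapunov θstar θ ϑ t ≤ lyapunov θstar θ ϑ 0 := by
  have hint : 0 ≤ ∫ s in (0 : ℝ)..t, dissipation β γ φ θstar θ ϑ s :=
    intervalIntegral.integral_nonneg ht fun s _ => dissipation_nonneg hβ.le hγ s
  linarith [h.lyapunov_add_integral_dissipation_le hβ.ne' hγ hφ ht]

theorem integrableOn_dissipation (h : HigherOrderTuner β γ φ θstar θ ϑ) (hβ : 0 < β)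
    (hγ : 0 ≤ γ) (hφ : Continuous φ) : IntegrableOn (dissipation β γ φ θstar θ ϑ) (Ioi 0) := by
  refine integrableOn_Ioi_of_intervalIntegral_norm_bounded (lyapunov θstar θ ϑ 0) 0
    (fun t => (h.continuous_dissipation hφ).integrableOn_Ioc) tendsto_id ?_
  filter_upwards [eventually_ge_atTop 0] with t ht
  have hV : 0 ≤ lyapunov θstar θ ϑ t := by unfold lyapunov; positivity
  simp only [id, Real.norm_of_nonneg (dissipation_nonneg hβ.le hγ _)]
  linarith [h.lyapunov_add_integral_dissipation_le hβ.ne' hγ hφ ht]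

theorem isBigO_θ_sub_ϑ (h : HigherOrderTuner β γ φ θstar θ ϑ) (hβ : 0 < β) (hγ : 0 ≤ γ)
    (hφ : Continuous φ) : (fun t => θ t - ϑ t) =O[atTop] fun _ => (1 : ℝ) := by
  refine isBigO_one_of_norm_sq_le (C := lyapunov θstar θ ϑ 0) ?_
  filter_upwards [eventually_ge_atTop 0] with t ht
  have := h.lyapunov_le hβ hγ hφ ht
  unfold lyapunov at this ⊢
  nlinarith [sq_nonneg ‖ϑ t - θstar‖]

theorem isBigO_ϑ_sub (h : HigherOrderTuner β γ φ θstar θ ϑ) (hβ : 0 < β) (hγ : 0 ≤ γ)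
    (hφ : Continuous φ) : (fun t => ϑ t - θstar) =O[atTop] fun _ => (1 : ℝ) := by
  refine isBigO_one_of_norm_sq_le (C := lyapunov θstar θ ϑ 0) ?_
  filter_upwards [eventually_ge_atTop 0] with t ht
  have := h.lyapunov_le hβ hγ hφ ht
  unfold lyapunov at this ⊢
  nlinarith [sq_nonneg ‖θ t - ϑ t‖]

theorem isBigO_θ_sub (h : HigherOrderTuner β γ φ θstar θ ϑ) (hβ : 0 < β) (hγ : 0 ≤ γ)
    (hφ : Continuous φ) : (fun t => θ t - θstar) =O[atTop] fun _ => (1 : ℝ) := by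
  simpa using (h.isBigO_θ_sub_ϑ hβ hγ hφ).add (h.isBigO_ϑ_sub hβ hγ hφ)

theorem exists_hasDerivAt_dissipation_isBigO (h : HigherOrderTuner β γ φ θstar θ ϑ) (hβ : 0 < β)
    (hγ : 0 ≤ γ) (hφ : ∀ t, HasDerivAt φ (φ' t) t) (hφb : φ =O[atTop] fun _ => (1 : ℝ))
    (hφ'b : φ' =O[atTop] fun _ => (1 : ℝ)) :
    ∃ D' : ℝ → ℝ, (∀ t, HasDerivAt (dissipation β γ φ θstar θ ϑ) (D' t) t) ∧
      D' =O[atTop] fun _ => (1 : ℝ) := by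
  have hφc : Continuous φ := continuous_iff_continuousAt.2 fun t => (hφ t).continuousAt
  have hb := h.isBigO_θ_sub_ϑ hβ hγ hφc
  have hθs := h.isBigO_θ_sub hβ hγ hφc
  have he := isBigO_one_inner hθs hφb
  have hθ' : (fun t => (-(β * (1 + 2 * γ / β * ‖φ t‖ ^ 2))) • (θ t - ϑ t)) =O[atTop]
      fun _ => (1 : ℝ) := by
    simpa using (isBigO_neg_mul_one_add_mul_norm_sq hφb β (2 * γ / β)).smul hb
  have hϑ' : (fun t => (-γ * ⟪θ t - θstar, φ t⟫) • φ t) =O[atTop] fun _ => (1 : ℝ) := by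
    simpa using (he.const_mul_left (-γ)).smul hφb
  have he' := (isBigO_one_inner hθs hφ'b).add (isBigO_one_inner hθ' hφb)
  have hbb' := isBigO_one_inner hb (hθ'.sub hϑ')
  refine ⟨_, fun t =>
    (((((h.hasDerivAt_θ t).sub_const θstar).inner ℝ (hφ t)).pow 2).const_mul γ).add
      (((h.hasDerivAt_θ t).sub (h.hasDerivAt_ϑ t)).norm_sq.const_mul (2 * β)), ?_⟩
  have hee' := (he.const_mul_left 2).mul he'
  simp only [mul_one] at hee'
  simpa using (hee'.const_mul_left γ).add ((hbb'.const_mul_left 2).const_mul_left (2 * β))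

theorem tendsto_dissipation (h : HigherOrderTuner β γ φ θstar θ ϑ) (hβ : 0 < β) (hγ : 0 ≤ γ)
    (hφ : ∀ t, HasDerivAt φ (φ' t) t) (hφb : φ =O[atTop] fun _ => (1 : ℝ))
    (hφ'b : φ' =O[atTop] fun _ => (1 : ℝ)) :
    Tendsto (dissipation β γ φ θstar θ ϑ) atTop (𝓝 0) := by
  have hφc : Continuous φ := continuous_iff_continuousAt.2 fun t => (hφ t).continuousAt
  obtain ⟨D', hD, hD'⟩ := h.exists_hasDerivAt_dissipation_isBigO hβ hγ hφ hφb hφ'b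
  exact tendsto_zero_of_integrableOn_of_hasDerivAt (h.integrableOn_dissipation hβ hγ hφc) hD hD'

theorem tendsto_outputError (h : HigherOrderTuner β γ φ θstar θ ϑ) (hβ : 0 < β) (hγ : 0 < γ)
    (hφ : ∀ t, HasDerivAt φ (φ' t) t) (hφb : φ =O[atTop] fun _ => (1 : ℝ))
    (hφ'b : φ' =O[atTop] fun _ => (1 : ℝ)) :
    Tendsto (fun t => ⟪θ t - θstar, φ t⟫) atTop (𝓝 0) := by
  refine tendsto_zero_of_mul_norm_sq_le hγ (fun t => ?_)
    (h.tendsto_dissipation hβ hγ.le hφ hφb hφ'b)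
  rw [Real.norm_eq_abs, sq_abs, dissipation]
  nlinarith [sq_nonneg ‖θ t - ϑ t‖]

theorem tendsto_θ_sub_ϑ (h : HigherOrderTuner β γ φ θstar θ ϑ) (hβ : 0 < β) (hγ : 0 ≤ γ)
    (hφ : ∀ t, HasDerivAt φ (φ' t) t) (hφb : φ =O[atTop] fun _ => (1 : ℝ))
    (hφ'b : φ' =O[atTop] fun _ => (1 : ℝ)) :
    Tendsto (fun t => θ t - ϑ t) atTop (𝓝 0) := by
  refine tendsto_zero_of_mul_norm_sq_le (by positivity : 0 < 2 * β) (fun t => ?_)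
    (h.tendsto_dissipation hβ hγ hφ hφb hφ'b)
  rw [dissipation]
  nlinarith [sq_nonneg ⟪θ t - θstar, φ t⟫]

end HigherOrderTuner

end Tuner

theorem stmt_12_general {d : ℕ} (β γ : ℝ) (hβ : 0 < β) (hγ : 0 < γ)
    (φ φ' : ℝ → EuclideanSpace ℝ (Fin d))
    (hφ : ∀ t : ℝ, HasDerivAt φ (φ' t) t)
    (hφ_bdd : ∃ M : ℝ, ∀ t : ℝ, ‖φ t‖ ≤ M)
    (hφ'_bdd : ∃ M : ℝ, ∀ t : ℝ, ‖φ' t‖ ≤ M)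
    (θstar : EuclideanSpace ℝ (Fin d))
    (θ ϑ : ℝ → EuclideanSpace ℝ (Fin d))
    (Nt : ℝ → ℝ) (hNt : Nt = fun t => 1 + (2 * γ / β) * ‖φ t‖ ^ 2)
    (hϑ : ∀ t : ℝ, HasDerivAt ϑ ((-γ * ⟪θ t - θstar, φ t⟫) • φ t) t)
    (hθ : ∀ t : ℝ, HasDerivAt θ ((-(β * Nt t)) • (θ t - ϑ t)) t) :
    Tendsto (fun t => ⟪θ t - θstar, φ t⟫) atTop (nhds 0) ∧
    Tendsto (fun t => θ t - ϑ t) atTop (nhds (0 : EuclideanSpace ℝ (Fin d))) ∧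
    Tendsto (fun t => (-γ * ⟪θ t - θstar, φ t⟫) • φ t) atTop
      (nhds (0 : EuclideanSpace ℝ (Fin d))) ∧
    Tendsto (fun t => (-(β * Nt t)) • (θ t - ϑ t)) atTop
      (nhds (0 : EuclideanSpace ℝ (Fin d))) := by
  subst hNt
  have h : HigherOrderTuner β γ φ θstar θ ϑ := ⟨hϑ, hθ⟩
  obtain ⟨M, hM⟩ := hφ_bdd
  obtain ⟨M', hM'⟩ := hφ'_bdd
  have hφb : φ =O[atTop] fun _ => (1 : ℝ) := .of_bound M (.of_forall fun t => by simpa using hM t)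
  have hφ'b : φ' =O[atTop] fun _ => (1 : ℝ) :=
    .of_bound M' (.of_forall fun t => by simpa using hM' t)
  have he := h.tendsto_outputError hβ hγ hφ hφb hφ'b
  have hb := h.tendsto_θ_sub_ϑ hβ hγ.le hφ hφb hφ'b
  refine ⟨he, hb, ?_, ?_⟩
  · have hγe : Tendsto (fun t => -γ * ⟪θ t - θstar, φ t⟫) atTop (𝓝 0) := by
      simpa using he.const_mul (-γ)
    exact hγe.zero_smul_isBoundedUnder_le ((isBigO_one_iff ℝ).1 hφb)
  · exact ((isBigO_one_iff ℝ).1 (isBigO_neg_mul_one_add_mul_norm_sq hφb β _)).smul_tendsto_zero hb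

/-- Higher order tuner for time-varying regression with `μ = 2γ/β`: if `φ` and `φ'` are
bounded, then `e_y → 0`, `θ - ϑ → 0`, `ϑ' → 0` and `θ' → 0` as `t → ∞`. -/
theorem stmt_12 {d : ℕ} (β γ : ℝ) (hβ : 0 < β) (hγ : 0 < γ)
    (φ φ' : ℝ → EuclideanSpace ℝ (Fin d))
    (hφ : ∀ t : ℝ, HasDerivAt φ (φ' t) t) (hφ'c : Continuous φ')
    (hφ_bdd : ∃ M : ℝ, ∀ t : ℝ, ‖φ t‖ ≤ M)
    (hφ'_bdd : ∃ M : ℝ, ∀ t : ℝ, ‖φ' t‖ ≤ M)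
    (θstar : EuclideanSpace ℝ (Fin d))
    (θ ϑ : ℝ → EuclideanSpace ℝ (Fin d))
    (Nt : ℝ → ℝ) (hNt : Nt = fun t => 1 + (2 * γ / β) * ‖φ t‖ ^ 2)
    (hϑ : ∀ t : ℝ, HasDerivAt ϑ ((-γ * ⟪θ t - θstar, φ t⟫) • φ t) t)
    (hθ : ∀ t : ℝ, HasDerivAt θ ((-(β * Nt t)) • (θ t - ϑ t)) t) :
    Tendsto (fun t => ⟪θ t - θstar, φ t⟫) atTop (nhds 0) ∧
    Tendsto (fun t => θ t - ϑ t) atTop (nhds (0 : EuclideanSpace ℝ (Fin d))) ∧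
    Tendsto (fun t => (-γ * ⟪θ t - θstar, φ t⟫) • φ t) atTop
      (nhds (0 : EuclideanSpace ℝ (Fin d))) ∧
    Tendsto (fun t => (-(β * Nt t)) • (θ t - ϑ t)) atTop
      (nhds (0 : EuclideanSpace ℝ (Fin d))) :=
  stmt_12_general β γ hβ hγ φ φ' hφ hφ_bdd hφ'_bdd θstar θ ϑ Nt hNt hϑ hθ
end

section
/- Let N : ℝ → ℝ be continuously differentiable with N(t) ≥ 1 for all t, and let β, γ > 0. The Lagrangian L(θ, θ̇, t) = exp(∫_{t₀}^t β N(ν) dν) · (1/(β N(t))) · (½‖θ̇‖² - γ β N(t) · ½ e_y(θ,t)²), with e_y(θ,t) = ⟨θ - θ*, φ(t)⟩, has Euler–Lagrange equation θ'' + [β N(t) - N'(t)/N(t)] θ' = -γ β N(t) φ(t) e_y(θ(t), t). -/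
local notation "⟪" x ", " y "⟫" => @inner ℝ _ _ x y

/-- Euler–Lagrange equation for the Bregman Lagrangian
`L(θ,θ̇,t) = exp(∫_{t₀}^t βN) (1/(βN)) (½‖θ̇‖² - γβN · ½e_y²)`:
a C² curve `θ` satisfies `d/dt(∂L/∂θ̇) = ∂L/∂θ`, i.e.
`d/dt[(exp(∫_{t₀}^t βN)/(βN)) θ'] = -γ exp(∫_{t₀}^t βN) e_y φ`, if and only if
`θ'' + [βN - N'/N]θ' = -γβN φ e_y`. -/
theorem stmt_16 {d : ℕ} (β γ : ℝ) (hβ : 0 < β) (hγ : 0 < γ) (t₀ : ℝ)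
    (Nt Nt' : ℝ → ℝ) (hNtderiv : ∀ t : ℝ, HasDerivAt Nt (Nt' t) t)
    (hNt'c : Continuous Nt') (hNt1 : ∀ t : ℝ, 1 ≤ Nt t)
    (φ : ℝ → EuclideanSpace ℝ (Fin d)) (hφ : Continuous φ)
    (θstar : EuclideanSpace ℝ (Fin d))
    (θ θ' θ'' : ℝ → EuclideanSpace ℝ (Fin d))
    (hθ : ∀ t : ℝ, HasDerivAt θ (θ' t) t)
    (hθ' : ∀ t : ℝ, HasDerivAt θ' (θ'' t) t) :
    (∀ t : ℝ, HasDerivAt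
        (fun s => (Real.exp (∫ ν in t₀..s, β * Nt ν) / (β * Nt s)) • θ' s)
        ((-(γ * Real.exp (∫ ν in t₀..t, β * Nt ν))) • (⟪θ t - θstar, φ t⟫ • φ t)) t)
    ↔ (∀ t : ℝ, θ'' t + (β * Nt t - Nt' t / Nt t) • θ' t
        = (-(γ * β * Nt t)) • (⟪θ t - θstar, φ t⟫ • φ t)) := by
  have hNtc : Continuous Nt := continuous_iff_continuousAt.mpr
    fun t => (hNtderiv t).continuousAt
  set g : ℝ → ℝ := fun s => ∫ ν in t₀..s, β * Nt ν with hgdef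
  have hNne : ∀ t : ℝ, Nt t ≠ 0 := fun t => by linarith [hNt1 t]
  have hβNne : ∀ t : ℝ, β * Nt t ≠ 0 := fun t => mul_ne_zero hβ.ne' (hNne t)
  have hexpne : ∀ t : ℝ, Real.exp (g t) ≠ 0 := fun t => (Real.exp_pos _).ne'
  have hg : ∀ t : ℝ, HasDerivAt g (β * Nt t) t := fun t =>
    ((continuous_const.mul hNtc).integral_hasStrictDerivAt t₀ t).hasDerivAt
  set E : ℝ → ℝ := fun s => Real.exp (g s) / (β * Nt s) with hEdef
  set E' : ℝ → ℝ := fun t =>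
    (Real.exp (g t) * (β * Nt t) * (β * Nt t) - Real.exp (g t) * (β * Nt' t)) /
      (β * Nt t) ^ 2 with hE'def
  have hE : ∀ t : ℝ, HasDerivAt E (E' t) t := fun t =>
    ((hg t).exp).div ((hNtderiv t).const_mul β) (hβNne t)
  have hprod : ∀ t : ℝ, HasDerivAt (fun s => E s • θ' s)
      (E' t • θ' t + E t • θ'' t) t := fun t => by
    have := (hE t).smul (hθ' t)
    rwa [add_comm] at this
  have hE1 : ∀ t : ℝ, E' t = E t * (β * Nt t - Nt' t / Nt t) := fun t => by
    have h1 := hNne t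
    have h2 : β ≠ 0 := hβ.ne'
    simp only [hE'def, hEdef]
    field_simp
  have hE2 : ∀ t : ℝ, E t * (-(γ * β * Nt t)) = -(γ * Real.exp (g t)) := fun t => by
    have h1 := hNne t
    have h2 : β ≠ 0 := hβ.ne'
    simp only [hEdef]
    field_simp
  constructor
  · intro h t
    have huniq : E' t • θ' t + E t • θ'' t
        = (-(γ * Real.exp (g t))) • (⟪θ t - θstar, φ t⟫ • φ t) :=
      (hprod t).unique (h t)
    have hEpos : 0 < E t := div_pos (Real.exp_pos _) (mul_pos hβ (by linarith [hNt1 t]))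
    have := congrArg (fun v => (E t)⁻¹ • v) huniq
    simp only [smul_add, smul_smul, hE1] at this
    rw [inv_mul_cancel₀ hEpos.ne', ← hE2 t] at this
    simpa [mul_comm, mul_assoc, mul_left_comm, add_comm, smul_smul,
      inv_mul_cancel_left₀ hEpos.ne', mul_inv_cancel₀ hEpos.ne'] using this
  · intro h t
    have : E' t • θ' t + E t • θ'' t
        = (-(γ * Real.exp (g t))) • (⟪θ t - θstar, φ t⟫ • φ t) := by
      rw [hE1 t, ← hE2 t, mul_smul, mul_smul, ← smul_add, add_comm, h t]
    rw [← this]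
    exact hprod t
end
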